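/- arXiv:1812.03209 — 2 statements merged into one kernel-verified Lean document; each statement's English description precedes it below -/
import Mathlib

section
/- Let 𝔤 = 𝔤⁺ ⊕ 𝔥 be a direct sum decomposition of the Lie algebra 𝔤 into subspaces, and define the holonomy maps hol_s : 𝔤⁺ × 𝔥 → 𝔤⁺ and hol_{uc} : 𝔤⁺ × 𝔥 → 𝔥 near (0,0) by the equation exp(E)exp(F) = exp(hol_{uc}(E,F))exp(hol_s(E,F)). Then there exist κ₁, κ₂ > 0 such that hol_s, hol_{uc} are well-defined for ‖(E,F)‖ ≤ κ₁ and satisfy max(‖hol_s(E,F) − E‖, ‖hol_{uc}(E,F) − F‖) ≤ κ₂‖E‖‖F‖. -/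
/-!
The map `(E, F) ↦ exp F * exp E` on `𝔤⁺ × 𝔥` has derivative `(E, F) ↦ E + F` at the origin,
an isomorphism onto `𝔤` because the decomposition is direct. By the inverse function theorem
its local inverse is Lipschitz near `1`, so `exp E * exp F` factors as `exp F' * exp E'` with
`(E', F') - (E, F)` bounded by `exp E * exp F - exp F * exp E`, a commutator of two elements
within `O(‖E‖)` and `O(‖F‖)` of `1`, hence of size `O(‖E‖ ‖F‖)`.
-/

open NormedSpace Filter Topology Asymptotics

theorem HasStrictFDerivAt.isBigO_localInverse_comp_sub
    {𝕜 E F : Type*} [NontriviallyNormedField 𝕜]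
    [NormedAddCommGroup E] [NormedSpace 𝕜 E] [CompleteSpace E]
    [NormedAddCommGroup F] [NormedSpace 𝕜 F]
    {f : E → F} {f' : E ≃L[𝕜] F} {a : E} (hf : HasStrictFDerivAt f (f' : E →L[𝕜] F) a)
    {φ : E → F} (hφ : Tendsto φ (𝓝 a) (𝓝 (f a))) :
    (fun p => hf.localInverse f f' a (φ p) - p) =O[𝓝 a] fun p => φ p - f p := by
  have hpair : Tendsto (fun p => (φ p, f p)) (𝓝 a) (𝓝 (f a, f a)) :=
    hφ.prodMk_nhds hf.continuousAt.tendsto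
  refine (hf.to_localInverse.isBigO_sub.comp_tendsto hpair).congr' ?_ .rfl
  filter_upwards [hf.eventually_left_inverse] with p hp
  simp [hp]

theorem hasStrictFDerivAt_exp_comp_mul_exp_comp {𝕂 𝔸 E : Type*} [RCLike 𝕂] [NormedRing 𝔸]
    [NormedAlgebra 𝕂 𝔸] [CompleteSpace 𝔸] [NormedAddCommGroup E] [NormedSpace 𝕂 E]
    (u v : E →L[𝕂] 𝔸) :
    HasStrictFDerivAt (fun x => exp (u x) * exp (v x)) (u + v) 0 := by
  have hexp (w : E →L[𝕂] 𝔸) : HasStrictFDerivAt (fun x => exp (w x)) w 0 := by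
    have hexp_zero : HasStrictFDerivAt exp (1 : 𝔸 →L[𝕂] 𝔸) (w 0) := by
      simpa using hasStrictFDerivAt_exp_zero
    simpa [ContinuousLinearMap.one_def] using hexp_zero.comp (0 : E) w.hasStrictFDerivAt
  refine ((hexp u).mul' (hexp v)).congr_fderiv ?_
  ext x
  simp [add_comm]

section Commutator

variable {𝔸 : Type*} [NormedRing 𝔸] [NormedAlgebra ℝ 𝔸] [CompleteSpace 𝔸]

theorem isBigO_exp_sub_one : (fun x : 𝔸 => exp x - 1) =O[𝓝 0] fun x => x := by
  simpa using (hasStrictFDerivAt_exp_zero (𝕂 := ℝ) (𝔸 := 𝔸)).hasFDerivAt.isBigO_sub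

theorem isBigO_exp_mul_exp_sub_exp_mul_exp :
    (fun p : 𝔸 × 𝔸 => exp p.1 * exp p.2 - exp p.2 * exp p.1) =O[𝓝 0]
      fun p => ‖p.1‖ * ‖p.2‖ := by
  have h₁ : (fun p : 𝔸 × 𝔸 => exp p.1 - 1) =O[𝓝 0] fun p => ‖p.1‖ :=
    isBigO_norm_right.2 <| isBigO_exp_sub_one.comp_tendsto <| by
      simpa using continuous_fst.tendsto (0 : 𝔸 × 𝔸)
  have h₂ : (fun p : 𝔸 × 𝔸 => exp p.2 - 1) =O[𝓝 0] fun p => ‖p.2‖ :=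
    isBigO_norm_right.2 <| isBigO_exp_sub_one.comp_tendsto <| by
      simpa using continuous_snd.tendsto (0 : 𝔸 × 𝔸)
  -- `ab - ba = (a - 1)(b - 1) - (b - 1)(a - 1)`
  refine ((h₁.mul h₂).sub ((h₂.mul h₁).congr_right fun p => mul_comm _ _)).congr_left
    fun p => ?_
  noncomm_ring

end Commutator

theorem holonomy_maps_estimate_general
    {A : Type*} [NormedRing A] [NormedAlgebra ℝ A]
    [FiniteDimensional ℝ A]
    (gplus 𝔥 : Submodule ℝ A) (hcompl : IsCompl gplus 𝔥) :
    ∃ κ₁ > (0 : ℝ), ∃ κ₂ > (0 : ℝ),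
      ∀ E ∈ gplus, ∀ F ∈ 𝔥, ‖E‖ ≤ κ₁ → ‖F‖ ≤ κ₁ →
        ∃ E' ∈ gplus, ∃ F' ∈ 𝔥,
          NormedSpace.exp E * NormedSpace.exp F
            = NormedSpace.exp F' * NormedSpace.exp E' ∧
          max ‖E' - E‖ ‖F' - F‖ ≤ κ₂ * ‖E‖ * ‖F‖ := by
  have : CompleteSpace A := FiniteDimensional.complete ℝ A
  let ι : gplus × 𝔥 →L[ℝ] A × A := gplus.subtypeL.prodMap 𝔥.subtypeL
  let ιE := (ContinuousLinearMap.fst ℝ A A).comp ι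
  let ιF := (ContinuousLinearMap.snd ℝ A A).comp ι
  let f (p : gplus × 𝔥) : A := exp (ιF p) * exp (ιE p)
  let e := (Submodule.prodEquivOfIsCompl gplus 𝔥 hcompl).toContinuousLinearEquiv
  have hf : HasStrictFDerivAt f (e : gplus × 𝔥 →L[ℝ] A) 0 :=
    (hasStrictFDerivAt_exp_comp_mul_exp_comp ιF ιE).congr_fderiv <| by
      ext p <;> simp [ιE, ιF, ι, e, add_comm]
  have hφ : Tendsto (fun p => exp (ιE p) * exp (ιF p)) (𝓝 0) (𝓝 (f 0)) := by
    simpa [f] using (hasStrictFDerivAt_exp_comp_mul_exp_comp ιE ιF).continuousAt.tendsto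
  have hO := (hf.isBigO_localInverse_comp_sub hφ).trans
    (isBigO_exp_mul_exp_sub_exp_mul_exp.comp_tendsto (by simpa using ι.continuous.tendsto 0))
  obtain ⟨κ₂, hκ₂, hbound⟩ := hO.exists_pos
  obtain ⟨ε, hε, hball⟩ := Metric.eventually_nhds_iff.1
    ((hφ.eventually hf.eventually_right_inverse).and hbound.bound)
  refine ⟨ε / 2, by positivity, κ₂, hκ₂, fun E hE F hF hEn hFn => ?_⟩
  obtain ⟨hfactor, hle⟩ := hball (y := (⟨E, hE⟩, ⟨F, hF⟩)) <| by
    simpa [Prod.norm_def] using (max_le hEn hFn).trans_lt (half_lt_self hε)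
  exact ⟨_, (hf.localInverse f e 0 _).1.2, _, (hf.localInverse f e 0 _).2.2, hfactor.symm, by
    simpa [Prod.norm_def, ιE, ιF, ι, mul_assoc] using hle⟩

/-- Holonomy maps: given a direct sum decomposition `𝔤 = 𝔤⁺ ⊕ 𝔥` of the Lie algebra
(a finite-dimensional normed algebra `A`), there exist `κ₁, κ₂ > 0` such that for
`E ∈ 𝔤⁺`, `F ∈ 𝔥` with `‖E‖, ‖F‖ ≤ κ₁` there are `hol_uc(E,F) ∈ 𝔥` and
`hol_s(E,F) ∈ 𝔤⁺` with `exp(E)exp(F) = exp(hol_uc(E,F))exp(hol_s(E,F))` and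
`max(‖hol_s(E,F) − E‖, ‖hol_uc(E,F) − F‖) ≤ κ₂‖E‖‖F‖`. -/
theorem holonomy_maps_estimate
    {A : Type*} [NormedRing A] [NormedAlgebra ℝ A] [CompleteSpace A]
    [FiniteDimensional ℝ A]
    (gplus 𝔥 : Submodule ℝ A) (hcompl : IsCompl gplus 𝔥) :
    ∃ κ₁ > (0 : ℝ), ∃ κ₂ > (0 : ℝ),
      ∀ E ∈ gplus, ∀ F ∈ 𝔥, ‖E‖ ≤ κ₁ → ‖F‖ ≤ κ₁ →
        ∃ E' ∈ gplus, ∃ F' ∈ 𝔥,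
          NormedSpace.exp E * NormedSpace.exp F
            = NormedSpace.exp F' * NormedSpace.exp E' ∧
          max ‖E' - E‖ ‖F' - F‖ ≤ κ₂ * ‖E‖ * ‖F‖ :=
  holonomy_maps_estimate_general gplus 𝔥 hcompl
end

section
/- Let exp : 𝔤 → G be the exponential map of a Lie group G with Haar measure μ and Lebesgue measure Leb on 𝔤 (normalized so exp'(0) has Jacobian 1). For every ε' > 0 there exists ε'' > 0 such that for every measurable B ⊆ 𝔤 contained in the ball of radius ε'' about 0, one has (1−ε')Leb(B) ≤ μ(exp(B)) ≤ (1+ε')Leb(B). -/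
/-!
Left translation by a unit preserves `μ.map Units.val`. Strict differentiability of the local
inverse of `exp` at `1` shows that near `0` one can write `exp (x + y) = exp x * exp z` and
`exp x * exp z = exp (x + w)` with `‖z‖ ≤ (1 + δ) ‖y‖` and `‖w‖ ≤ (1 + δ) ‖z‖`, so `exp` of a
small closed ball `closedBall x r` lies between the translates by `exp x` of
`exp (ball 0 (r / (1 + δ)))` and `exp (ball 0 ((1 + δ) ^ 2 * r))`. The normalization `hnorm`
then gives `μ (exp (closedBall x r)) ≈ Leb (closedBall x r)` for all small balls near `0`, and the
Besicovitch differentiation theorem, applied to the finite measure `S ↦ μ (exp S)` near `0`,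
passes from closed balls to arbitrary measurable sets.
-/

open MeasureTheory Filter Metric Set NormedSpace
open scoped Topology ENNReal Pointwise

theorem ENNReal.eventually_mem_Icc_of_tendsto_div_nhds_one {α : Type*} {l : Filter α}
    {f g : α → ℝ≥0∞} (h : Tendsto (fun a ↦ f a / g a) l (𝓝 1))
    (hg : ∀ᶠ a in l, g a ≠ 0 ∧ g a ≠ ∞) {δ : ℝ} (hδ : 0 < δ) :
    ∀ᶠ a in l, f a ∈ Icc (ENNReal.ofReal (1 - δ) * g a) (ENNReal.ofReal (1 + δ) * g a) := by
  have hI : Icc (ENNReal.ofReal (1 - δ)) (ENNReal.ofReal (1 + δ)) ∈ 𝓝 (1 : ℝ≥0∞) :=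
    _root_.Icc_mem_nhds (ENNReal.ofReal_lt_one.2 (by linarith))
      (ENNReal.one_lt_ofReal.2 (by linarith))
  filter_upwards [h hI, hg] with a ⟨hlow, hup⟩ ⟨hg0, hgtop⟩
  exact ⟨(ENNReal.le_div_iff_mul_le (.inl hg0) (.inl hgtop)).1 hlow,
    (ENNReal.div_le_iff_le_mul (.inl hg0) (.inl hgtop)).1 hup⟩

theorem exists_pos_one_add_pow_le {ε : ℝ} (hε : 0 < ε) (n : ℕ) :
    ∃ δ > 0, (1 + δ) * ((1 + δ) ^ 2) ^ n ≤ 1 + ε ∧ 1 - ε ≤ (1 - δ) * ((1 + δ)⁻¹) ^ n := by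
  have hup : ∀ᶠ δ in 𝓝 (0 : ℝ), (1 + δ) * ((1 + δ) ^ 2) ^ n < 1 + ε :=
    ContinuousAt.eventually_lt (by fun_prop) continuousAt_const (by simpa)
  have hlow : ∀ᶠ δ in 𝓝 (0 : ℝ), 1 - ε < (1 - δ) * ((1 + δ)⁻¹) ^ n :=
    ContinuousAt.eventually_lt continuousAt_const (by fun_prop (disch := norm_num)) (by simpa)
  obtain ⟨δ, ⟨h₁, h₂⟩, hδ⟩ :=
    ((hup.and hlow).filter_mono (nhdsWithin_le_nhds (s := Ioi 0)) |>.and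
      self_mem_nhdsWithin).exists
  exact ⟨δ, hδ, h₁.le, h₂.le⟩

theorem Filter.Eventually.eventually_nhdsGT_forall_mem_closedBall {X Y : Type*}
    [TopologicalSpace X] [PseudoMetricSpace Y] {P : X × Y → Prop} {x₀ : X} {y₀ : Y}
    (h : ∀ᶠ p in 𝓝 (x₀, y₀), P p) :
    ∀ᶠ x in 𝓝 x₀, ∀ᶠ r in 𝓝[>] 0, ∀ y ∈ closedBall y₀ r, P (x, y) := by
  rw [nhds_prod_eq] at h
  filter_upwards [h.curry] with x hx
  exact nhdsWithin_le_nhds <| (tendsto_closedBall_smallSets y₀).eventually hx.smallSets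

theorem HasStrictFDerivAt.eventually_norm_le_one_add_mul {𝕜 E F : Type*}
    [NontriviallyNormedField 𝕜] [NormedAddCommGroup E] [NormedSpace 𝕜 E]
    [NormedAddCommGroup F] [NormedSpace 𝕜 F] {G : E × F → F}
    (hG : HasStrictFDerivAt G (ContinuousLinearMap.snd 𝕜 E F) 0)
    (hG0 : ∀ᶠ a in 𝓝 0, G (a, 0) = 0) {δ : ℝ} (hδ : 0 < δ) :
    ∀ᶠ p in 𝓝 0, ‖G p‖ ≤ (1 + δ) * ‖p.2‖ := by
  have hlim : Tendsto (fun p : E × F ↦ (p, (p.1, (0 : F)))) (𝓝 0) (𝓝 (0, 0)) :=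
    (continuous_id.prodMk (continuous_fst.prodMk continuous_const)).tendsto' _ _ rfl
  have hG0' : ∀ᶠ p : E × F in 𝓝 0, G (p.1, 0) = 0 :=
    (continuous_fst.tendsto' (0 : E × F) 0 rfl).eventually (p := fun a ↦ G (a, 0) = 0) hG0
  filter_upwards [(hG.isLittleO.comp_tendsto hlim).bound hδ, hG0'] with p hp hp0
  have hsub : p - (p.1, 0) = (0, p.2) := by ext <;> simp
  simp only [Function.comp_apply, hsub, hp0, sub_zero, ContinuousLinearMap.coe_snd',
    Prod.norm_mk, norm_zero, norm_nonneg, max_eq_right] at hp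
  calc ‖G p‖ ≤ ‖p.2‖ + ‖G p - p.2‖ := norm_le_norm_add_norm_sub' _ _
    _ ≤ (1 + δ) * ‖p.2‖ := by linarith

theorem MeasureTheory.Measure.addHaar_ball_mul_eq_closedBall {E : Type*} [NormedAddCommGroup E]
    [NormedSpace ℝ E] [MeasurableSpace E] [BorelSpace E] [FiniteDimensional ℝ E]
    (μ : Measure E) [μ.IsAddHaarMeasure] (x : E) {t r : ℝ} (ht : 0 < t) (hr : 0 < r) :
    μ (ball 0 (t * r)) = ENNReal.ofReal (t ^ Module.finrank ℝ E) * μ (closedBall x r) := by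
  rw [Measure.addHaar_ball_mul_of_pos μ 0 ht, Measure.addHaar_closedBall μ x hr.le,
    Measure.addHaar_ball_of_pos μ 0 hr]

theorem measure_le_of_forall_eventually_closedBall_le {E : Type*} [MetricSpace E]
    [SecondCountableTopology E] [MeasurableSpace E] [BorelSpace E] [HasBesicovitchCovering E]
    (μ ν : Measure E) [SFinite μ] [IsLocallyFiniteMeasure ν] (s : Set E)
    (h : ∀ x ∈ s, ∀ᶠ r in 𝓝[>] 0, μ (closedBall x r) ≤ ν (closedBall x r)) : μ s ≤ ν s :=
  (Besicovitch.vitaliFamily μ).measure_le_of_frequently_le ν .rfl s fun x hx ↦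
    (Besicovitch.tendsto_filterAt μ x).frequently (h x hx).frequently

theorem OpenPartialHomeomorph.map_symm_restrict_image_apply {X Y : Type*} [TopologicalSpace X]
    [MeasurableSpace X] [BorelSpace X] [TopologicalSpace Y] [MeasurableSpace Y] [BorelSpace Y]
    (e : OpenPartialHomeomorph X Y) (m : Measure Y) {U S : Set X} (hU : IsOpen U)
    (hUe : U ⊆ e.source) (hSU : S ⊆ U) (hS : MeasurableSet S) :
    (m.restrict (e '' U)).map e.symm S = m (e '' S) := by
  have heU : IsOpen (e '' U) := e.isOpen_image_of_subset_source hU hUe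
  have hsymm : AEMeasurable e.symm (m.restrict (e '' U)) :=
    (e.continuousOn_symm.mono (e.image_source_eq_target ▸ image_mono hUe)).aemeasurable
      heU.measurableSet
  rw [Measure.map_apply_of_aemeasurable hsymm hS, Measure.restrict_apply' heU.measurableSet,
    e.image_eq_target_inter_inv_preimage hUe, e.image_eq_target_inter_inv_preimage (hSU.trans hUe)]
  congr 1
  ext y
  simp only [mem_inter_iff, mem_preimage]
  exact ⟨fun h ↦ ⟨h.2.1, h.1⟩, fun h ↦ ⟨h.2, h.1, hSU h.2⟩⟩

section Units

variable {A : Type*} [NormedRing A] [CompleteSpace A] [MeasurableSpace A] [BorelSpace A]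

theorem Units.measurableEmbedding_val : MeasurableEmbedding (Units.val : Aˣ → A) where
  injective := Units.val_injective
  measurable := measurable_iff_comap_le.2 le_rfl
  measurableSet_image' := by
    rintro _ ⟨S, hS, rfl⟩
    rw [image_preimage_eq_inter_range]
    exact hS.inter Units.isOpenEmbedding_val.isOpen_range.measurableSet

variable (μ : Measure Aˣ)

theorem map_units_val_smul [μ.IsMulLeftInvariant] (u : Aˣ) (S : Set A) :
    μ.map Units.val (u • S) = μ.map Units.val S := by
  have : Units.val ⁻¹' (u • S) = u • (Units.val ⁻¹' S) := by
    ext v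
    rw [mem_preimage, Set.mem_smul_set_iff_inv_smul_mem, Set.mem_smul_set_iff_inv_smul_mem,
      mem_preimage, smul_eq_mul, Units.val_mul, Units.smul_def, smul_eq_mul]
  rw [Units.measurableEmbedding_val.map_apply, Units.measurableEmbedding_val.map_apply, this,
    measure_smul]

theorem map_units_val_lt_top_of_isCompact [IsFiniteMeasureOnCompacts μ] {K : Set A}
    (hK : IsCompact K) (hKu : K ⊆ range (Units.val : Aˣ → A)) : μ.map Units.val K < ∞ := by
  rw [Units.measurableEmbedding_val.map_apply]
  exact (Units.isOpenEmbedding_val.isInducing.isCompact_preimage_iff hKu |>.2 hK).measure_lt_top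

end Units

section Exp

variable {A : Type*} [NormedRing A] [NormedAlgebra ℝ A] [CompleteSpace A]

theorem hasStrictFDerivAt_exp_zero_refl :
    HasStrictFDerivAt (exp : A → A) (ContinuousLinearEquiv.refl ℝ A : A →L[ℝ] A) 0 :=
  hasStrictFDerivAt_exp_zero

variable (A) in
noncomputable def expLocalInverse : A → A :=
  hasStrictFDerivAt_exp_zero_refl.localInverse exp _ 0

theorem eventually_exp_expLocalInverse : ∀ᶠ y in 𝓝 1, exp (expLocalInverse A y) = y := by
  have h := (hasStrictFDerivAt_exp_zero_refl (A := A)).eventually_right_inverse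
  rw [exp_zero] at h
  exact h

theorem eventually_expLocalInverse_exp : ∀ᶠ x in 𝓝 0, expLocalInverse A (exp x) = x :=
  hasStrictFDerivAt_exp_zero_refl.eventually_left_inverse

theorem hasStrictFDerivAt_expLocalInverse :
    HasStrictFDerivAt (expLocalInverse A) (1 : A →L[ℝ] A) 1 := by
  have h := (hasStrictFDerivAt_exp_zero_refl (A := A)).to_localInverse
  rw [exp_zero] at h
  exact h

theorem hasStrictFDerivAt_expLocalInverse_exp_mul_exp {E : Type*} [NormedAddCommGroup E]
    [NormedSpace ℝ E] {f g : E → A} {f' g' : E →L[ℝ] A} {p : E}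
    (hf : HasStrictFDerivAt f f' p) (hg : HasStrictFDerivAt g g' p) (hf0 : f p = 0)
    (hg0 : g p = 0) :
    HasStrictFDerivAt (fun q ↦ expLocalInverse A (exp (f q) * exp (g q))) (f' + g') p := by
  have hexp {a : A} (ha : a = 0) : HasStrictFDerivAt exp (1 : A →L[ℝ] A) a :=
    ha ▸ hasStrictFDerivAt_exp_zero
  have hlog : HasStrictFDerivAt (expLocalInverse A) (1 : A →L[ℝ] A) (exp (f p) * exp (g p)) := by
    rw [hf0, hg0, exp_zero, mul_one]
    exact hasStrictFDerivAt_expLocalInverse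
  refine (hlog.comp p (((hexp hf0).comp p hf).mul' ((hexp hg0).comp p hg))).congr_fderiv ?_
  ext v
  simp [hf0, hg0, add_comm]

theorem eventually_exists_exp_add_eq_exp_mul_exp {δ : ℝ} (hδ : 0 < δ) :
    ∀ᶠ p : A × A in 𝓝 0, ∃ z, exp (p.1 + p.2) = exp p.1 * exp z ∧ ‖z‖ ≤ (1 + δ) * ‖p.2‖ := by
  -- `exp` does not depend on this instance; Mathlib states the `exp` API for `ℚ`-algebras.
  let _ : NormedAlgebra ℚ A := .restrictScalars ℚ ℝ A
  have hw0 : Tendsto (fun p : A × A ↦ exp (-p.1) * exp (p.1 + p.2)) (𝓝 0) (𝓝 1) :=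
    (by fun_prop : Continuous fun p : A × A ↦ exp (-p.1) * exp (p.1 + p.2)).tendsto' 0 1
      (by simp)
  have hderiv : HasStrictFDerivAt (fun p : A × A ↦ expLocalInverse A (exp (-p.1) * exp (p.1 + p.2)))
      (ContinuousLinearMap.snd ℝ A A) 0 := by
    refine (hasStrictFDerivAt_expLocalInverse_exp_mul_exp (f := fun p : A × A ↦ -p.1)
      (g := fun p ↦ p.1 + p.2) (p := 0) hasStrictFDerivAt_fst.neg
      (hasStrictFDerivAt_fst.add hasStrictFDerivAt_snd) (by simp) (by simp)).congr_fderiv ?_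
    ext v <;> simp
  have hzero : ∀ᶠ a : A in 𝓝 0, expLocalInverse A (exp (-a) * exp (a + 0)) = 0 := by
    refine Eventually.of_forall fun a ↦ ?_
    simpa [← exp_add_of_commute (Commute.neg_left (Commute.refl a)), exp_zero] using
      eventually_expLocalInverse_exp.self_of_nhds
  filter_upwards [hderiv.eventually_norm_le_one_add_mul hzero hδ,
    hw0.eventually eventually_exp_expLocalInverse] with p hp hinv
  refine ⟨_, ?_, hp⟩
  rw [hinv, ← mul_assoc, ← exp_add_of_commute (Commute.neg_right (Commute.refl p.1)),
    add_neg_cancel, exp_zero, one_mul]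

theorem eventually_exists_exp_mul_exp_eq_exp_add {δ : ℝ} (hδ : 0 < δ) :
    ∀ᶠ p : A × A in 𝓝 0, ∃ w, exp p.1 * exp p.2 = exp (p.1 + w) ∧ ‖w‖ ≤ (1 + δ) * ‖p.2‖ := by
  let _ : NormedAlgebra ℚ A := .restrictScalars ℚ ℝ A
  have hw0 : Tendsto (fun p : A × A ↦ exp p.1 * exp p.2) (𝓝 0) (𝓝 1) :=
    (by fun_prop : Continuous fun p : A × A ↦ exp p.1 * exp p.2).tendsto' 0 1 (by simp)
  have hderiv : HasStrictFDerivAt (fun p : A × A ↦ expLocalInverse A (exp p.1 * exp p.2) - p.1)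
      (ContinuousLinearMap.snd ℝ A A) 0 := by
    refine ((hasStrictFDerivAt_expLocalInverse_exp_mul_exp (f := Prod.fst) (g := Prod.snd)
      (p := (0 : A × A)) hasStrictFDerivAt_fst hasStrictFDerivAt_snd rfl rfl).sub
      hasStrictFDerivAt_fst).congr_fderiv ?_
    ext v <;> simp
  have hzero : ∀ᶠ a : A in 𝓝 0, expLocalInverse A (exp a * exp 0) - a = 0 := by
    filter_upwards [eventually_expLocalInverse_exp] with a ha
    simp [exp_zero, ha]
  filter_upwards [hderiv.eventually_norm_le_one_add_mul hzero hδ,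
    hw0.eventually eventually_exp_expLocalInverse] with p hp hinv
  exact ⟨_, by rw [add_sub_cancel, hinv], hp⟩

end Exp

section ExpMeasure

variable {A : Type*} [NormedRing A] [NormedAlgebra ℝ A] [CompleteSpace A] [MeasurableSpace A]
  [BorelSpace A] (μ : Measure Aˣ)

theorem map_units_val_exp_closedBall_le [μ.IsMulLeftInvariant] {x : A} {r s : ℝ}
    (h : ∀ y ∈ closedBall (0 : A) r, ∃ z ∈ ball (0 : A) s, exp (x + y) = exp x * exp z) :
    μ.map Units.val (exp '' closedBall x r) ≤ μ.map Units.val (exp '' ball 0 s) := by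
  let _ : NormedAlgebra ℚ A := .restrictScalars ℚ ℝ A
  rw [← map_units_val_smul μ (isUnit_exp x).unit (exp '' ball 0 s)]
  refine measure_mono ?_
  rintro _ ⟨y, hy, rfl⟩
  obtain ⟨z, hz, hxz⟩ := h (y - x) (by rwa [mem_closedBall_zero_iff, ← dist_eq_norm])
  rw [add_sub_cancel] at hxz
  exact ⟨exp z, mem_image_of_mem _ hz, hxz.symm⟩

theorem map_units_val_exp_ball_le [μ.IsMulLeftInvariant] {x : A} {r s : ℝ}
    (h : ∀ z ∈ ball (0 : A) s, ∃ y ∈ closedBall (0 : A) r, exp x * exp z = exp (x + y)) :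
    μ.map Units.val (exp '' ball 0 s) ≤ μ.map Units.val (exp '' closedBall x r) := by
  let _ : NormedAlgebra ℚ A := .restrictScalars ℚ ℝ A
  rw [← map_units_val_smul μ (isUnit_exp x).unit (exp '' ball 0 s)]
  refine measure_mono ?_
  rintro _ ⟨_, ⟨z, hz, rfl⟩, rfl⟩
  obtain ⟨y, hy, hxy⟩ := h z hz
  refine ⟨x + y, ?_, hxy.symm⟩
  rwa [mem_closedBall, dist_eq_norm, add_sub_cancel_left, ← mem_closedBall_zero_iff]

theorem exists_isFiniteMeasure_eq_map_units_val_exp_image [FiniteDimensional ℝ A]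
    [IsFiniteMeasureOnCompacts μ] :
    ∃ ρ > 0, ∃ ν : Measure A, IsFiniteMeasure ν ∧
      ∀ S ⊆ ball (0 : A) ρ, MeasurableSet S → ν S = μ.map Units.val (exp '' S) := by
  let _ : NormedAlgebra ℚ A := .restrictScalars ℚ ℝ A
  have hexp := hasStrictFDerivAt_exp_zero_refl (A := A)
  set e := hexp.toOpenPartialHomeomorph exp
  have he : ⇑e = exp := hexp.toOpenPartialHomeomorph_coe
  obtain ⟨ρ, hρ, hρe⟩ := nhds_basis_closedBall.mem_iff.1
    (e.open_source.mem_nhds hexp.mem_toOpenPartialHomeomorph_source)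
  have hfin : μ.map Units.val (exp '' ball 0 ρ) < ∞ :=
    (measure_mono (image_mono ball_subset_closedBall)).trans_lt <|
      map_units_val_lt_top_of_isCompact μ
        ((isCompact_closedBall 0 ρ).image exp_continuous)
        (by rintro _ ⟨x, -, rfl⟩; exact ⟨(isUnit_exp x).unit, rfl⟩)
  refine ⟨ρ, hρ, ((μ.map Units.val).restrict (e '' ball 0 ρ)).map e.symm, ?_,
    fun S hS hSm ↦ ?_⟩
  · have : IsFiniteMeasure ((μ.map Units.val).restrict (e '' ball 0 ρ)) :=
      isFiniteMeasure_restrict.2 (he ▸ hfin.ne)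
    infer_instance
  · rw [e.map_symm_restrict_image_apply _ isOpen_ball (ball_subset_closedBall.trans hρe) hS hSm,
      he]

theorem eventually_map_units_val_exp_closedBall_mem_Icc [FiniteDimensional ℝ A]
    (Leb : Measure A) [Leb.IsAddHaarMeasure] [μ.IsMulLeftInvariant]
    (hnorm : Tendsto (fun r : ℝ ↦ μ.map Units.val (exp '' ball 0 r) / Leb (ball (0 : A) r))
      (𝓝[>] 0) (𝓝 1)) {ε : ℝ} (hε : 0 < ε) :
    ∀ᶠ x in 𝓝 (0 : A), ∀ᶠ r in 𝓝[>] 0, μ.map Units.val (exp '' closedBall x r) ∈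
      Icc (ENNReal.ofReal (1 - ε) * Leb (closedBall x r))
        (ENNReal.ofReal (1 + ε) * Leb (closedBall x r)) := by
  set n := Module.finrank ℝ A
  obtain ⟨δ, hδ, hδup, hδlow⟩ := exists_pos_one_add_pow_le hε n
  have hball := ENNReal.eventually_mem_Icc_of_tendsto_div_nhds_one hnorm
    (eventually_mem_nhdsWithin.mono fun r hr ↦
      ⟨(measure_ball_pos Leb 0 hr).ne', measure_ball_lt_top.ne⟩) hδ
  have hδ₁ : 0 < 1 + δ := by linarith
  filter_upwards
    [(eventually_exists_exp_add_eq_exp_mul_exp (A := A) hδ).eventually_nhdsGT_forall_mem_closedBall,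
    (eventually_exists_exp_mul_exp_eq_exp_add (A := A) hδ).eventually_nhdsGT_forall_mem_closedBall]
    with x hxup hxlow
  filter_upwards [hxup, eventually_nhdsGT_zero_mul_left (inv_pos.2 hδ₁) hxlow,
    eventually_nhdsGT_zero_mul_left (pow_pos hδ₁ 2) hball,
    eventually_nhdsGT_zero_mul_left (inv_pos.2 hδ₁) hball, self_mem_nhdsWithin]
    with r hrup hrlow hballup hballlow (hr : 0 < r)
  constructor
  · calc ENNReal.ofReal (1 - ε) * Leb (closedBall x r)
        ≤ ENNReal.ofReal ((1 - δ) * ((1 + δ)⁻¹) ^ n) * Leb (closedBall x r) := by gcongr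
      _ = ENNReal.ofReal (1 - δ) * Leb (ball 0 ((1 + δ)⁻¹ * r)) := by
        rw [Measure.addHaar_ball_mul_eq_closedBall Leb x (inv_pos.2 hδ₁) hr, ← mul_assoc,
          ENNReal.ofReal_mul' (by positivity)]
      _ ≤ μ.map Units.val (exp '' ball 0 ((1 + δ)⁻¹ * r)) := hballlow.1
      _ ≤ μ.map Units.val (exp '' closedBall x r) := by
        refine map_units_val_exp_ball_le μ fun z hz ↦ ?_
        obtain ⟨w, hw, hwn⟩ := hrlow z (ball_subset_closedBall hz)
        refine ⟨w, ?_, hw⟩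
        rw [mem_ball_zero_iff, lt_inv_mul_iff₀ hδ₁] at hz
        rw [mem_closedBall_zero_iff]
        linarith
  · calc μ.map Units.val (exp '' closedBall x r)
        ≤ μ.map Units.val (exp '' ball 0 ((1 + δ) ^ 2 * r)) := by
          refine map_units_val_exp_closedBall_le μ fun y hy ↦ ?_
          obtain ⟨z, hz, hzn⟩ := hrup y hy
          refine ⟨z, ?_, hz⟩
          rw [mem_closedBall_zero_iff] at hy
          rw [mem_ball_zero_iff]
          nlinarith [mul_pos (mul_pos hδ hr) hδ₁]
      _ ≤ ENNReal.ofReal (1 + δ) * Leb (ball 0 ((1 + δ) ^ 2 * r)) := hballup.2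
      _ = ENNReal.ofReal ((1 + δ) * ((1 + δ) ^ 2) ^ n) * Leb (closedBall x r) := by
        rw [Measure.addHaar_ball_mul_eq_closedBall Leb x (pow_pos hδ₁ 2) hr, ← mul_assoc,
          ENNReal.ofReal_mul hδ₁.le]
      _ ≤ ENNReal.ofReal (1 + ε) * Leb (closedBall x r) := by gcongr

end ExpMeasure

/-- `exp` is almost measure-preserving near `0`: with `Leb` an additive Haar measure on
the Lie algebra (the finite-dimensional normed algebra `A`) and `μ` a Haar measure on
the group of units, normalized so that the derivative of `exp` at `0` is
measure-preserving, for every `ε' > 0` there is `ε'' > 0` such that every measurable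
`B` inside the ball of radius `ε''` around `0` satisfies
`(1−ε')Leb(B) ≤ μ(exp(B)) ≤ (1+ε')Leb(B)`. -/
theorem exp_almost_measure_preserving
    {A : Type*} [NormedRing A] [NormedAlgebra ℝ A] [CompleteSpace A]
    [FiniteDimensional ℝ A] [MeasurableSpace A] [BorelSpace A]
    (Leb : Measure A) [Leb.IsAddHaarMeasure]
    (μ : Measure Aˣ) [μ.IsHaarMeasure]
    (hnorm : Tendsto
      (fun r : ℝ => μ.map Units.val (NormedSpace.exp '' Metric.ball 0 r)
        / Leb (Metric.ball (0 : A) r))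
      (nhdsWithin 0 (Set.Ioi 0)) (nhds 1)) :
    ∀ ε' > (0 : ℝ), ∃ ε'' > (0 : ℝ), ∀ B ⊆ Metric.ball (0 : A) ε'', MeasurableSet B →
      ENNReal.ofReal (1 - ε') * Leb B ≤ μ.map Units.val (NormedSpace.exp '' B) ∧
      μ.map Units.val (NormedSpace.exp '' B) ≤ ENNReal.ofReal (1 + ε') * Leb B := by
  intro ε hε
  obtain ⟨κ, hκ, hcmp⟩ := Metric.eventually_nhds_iff_ball.1
    (eventually_map_units_val_exp_closedBall_mem_Icc μ Leb hnorm hε)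
  obtain ⟨ρ, hρ, ν, hν, hνexp⟩ := exists_isFiniteMeasure_eq_map_units_val_exp_image μ
  have hνball : ∀ S ⊆ ball (0 : A) (min κ ρ), MeasurableSet S →
      ν S = μ.map Units.val (exp '' S) := fun S hS ↦
    hνexp S (hS.trans (ball_subset_ball (min_le_right κ ρ)))
  refine ⟨min κ ρ, lt_min hκ hρ, fun B hB hBm ↦ ?_⟩
  have hνclosedBall : ∀ x ∈ B, ∀ᶠ r in 𝓝[>] 0, ν (closedBall x r) ∈
      Icc (ENNReal.ofReal (1 - ε) * Leb (closedBall x r))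
        (ENNReal.ofReal (1 + ε) * Leb (closedBall x r)) := fun x hx ↦ by
    filter_upwards [hcmp x (ball_subset_ball (min_le_left κ ρ) (hB hx)),
      nhdsWithin_le_nhds (eventually_closedBall_subset (isOpen_ball.mem_nhds (hB hx)))]
      with r hr hrB
    rwa [hνball _ hrB measurableSet_closedBall]
  have : IsFiniteMeasureOnCompacts (ENNReal.ofReal (1 + ε) • Leb) :=
    .smul Leb ENNReal.ofReal_ne_top
  rw [← hνball B hB hBm]
  exact ⟨measure_le_of_forall_eventually_closedBall_le (ENNReal.ofReal (1 - ε) • Leb) ν B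
      fun x hx ↦ (hνclosedBall x hx).mono fun _ hr ↦ hr.1,
    measure_le_of_forall_eventually_closedBall_le ν (ENNReal.ofReal (1 + ε) • Leb) B
      fun x hx ↦ (hνclosedBall x hx).mono fun _ hr ↦ hr.2⟩
end
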